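/- Suppose φ₀ : ℝ → ℝ is twice continuously differentiable, positive, square-integrable, and satisfies −φ₀'' + V·φ₀ = −μ₀²·φ₀ on ℝ, with 0.808 ≤ μ₀ ≤ 0.883. Then −μ₀² is the unique negative eigenvalue of L and it has multiplicity one: for every λ < 0 with λ ≠ −μ₀², there is no nonzero twice continuously differentiable ψ ∈ L²(ℝ) with −ψ'' + V·ψ = λ·ψ, and every twice continuously differentiable ψ ∈ L²(ℝ) with −ψ'' + V·ψ = −μ₀²·ψ is a real scalar multiple of φ₀. Moreover φ₀ is an even function and φ₀' is odd. -/

import Mathlib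

/-!
On `x ≥ 1.03` the potential is nonnegative, so for `lam < 0` the function `ψ ψ'` is nondecreasing
there; together with `ψ ∈ L²` this forces `ψ ψ' < 0` wherever `ψ ≠ 0`, hence decay of `ψ` and
boundedness of `ψ'`, and a zero of `ψ` on the tail forces `ψ ≡ 0` by ODE uniqueness. Since
`V ≥ -9/4` and `(3/2) · 1.03 < π/2`, Sturm comparison with `sin (3/2 · (t - x₀))` shows that
`ψ` cannot vanish at a point `x₀ ≥ 0` beyond which it has no zero; by evenness of `V` a nonzero
eigenfunction with negative eigenvalue therefore has no zero at all. Two positive eigenfunctions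
`φ, ψ` have a Wronskian with `W' = (κ - lam) φ ψ` of constant sign and `W → 0` at `±∞`, so
`W ≡ 0`: the eigenvalues agree and `ψ / φ` is constant. Evenness of `φ₀` follows by applying
this to `φ₀ (-x)`.
-/

open Real MeasureTheory Filter

noncomputable def Qs (x : ℝ) : ℝ := (3/2) * (1 / Real.cosh (x/2))^2
noncomputable def Hs (x : ℝ) : ℝ := Real.tanh (x/2)
noncomputable def alphaFn (x : ℝ) : ℝ := (1/3) * (Real.sinh x + x)
noncomputable def alphaInv : ℝ → ℝ := Function.invFun alphaFn
noncomputable def Qt (x : ℝ) : ℝ := Qs (alphaInv x)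
noncomputable def Ht (x : ℝ) : ℝ := Hs (alphaInv x)
noncomputable def Vpot (x : ℝ) : ℝ := 2 * (Qt x)^2 * (1 - Qt x)

open Set Topology

theorem exists_le_lt_of_integrable {g : ℝ → ℝ} (hg : Integrable g) (a : ℝ) {ε : ℝ}
    (hε : 0 < ε) : ∃ x, a ≤ x ∧ g x < ε := by
  by_contra! h
  have hconst : IntegrableOn (fun _ => ε) (Ici a) := by
    refine hg.integrableOn.norm.mono' aestronglyMeasurable_const ?_
    filter_upwards [ae_restrict_mem measurableSet_Ici] with x hx
    rw [norm_of_nonneg hε.le]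
    exact (h x hx).trans (le_norm_self _)
  simp [integrableOn_const_iff, hε.ne'] at hconst

theorem IsPreconnected.pos_or_neg_of_ne_zero {α : Type*} [TopologicalSpace α] {s : Set α}
    (hs : IsPreconnected s) {f : α → ℝ} (hf : ContinuousOn f s) (h : ∀ x ∈ s, f x ≠ 0) :
    (∀ x ∈ s, 0 < f x) ∨ (∀ x ∈ s, f x < 0) := by
  by_contra! hsign
  obtain ⟨⟨x, hx, hfx⟩, ⟨y, hy, hfy⟩⟩ := hsign
  obtain ⟨z, hz, hfz⟩ := hs.intermediate_value hx hy hf ⟨hfx, hfy⟩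
  exact h z hz hfz

theorem eq_zero_of_hasDerivAt_of_tendsto {f g : ℝ → ℝ} {c : ℝ}
    (hf : ∀ x, HasDerivAt f (c * g x) x) (hg : ∀ x, 0 ≤ g x)
    (hbot : Tendsto f atBot (𝓝 0)) (htop : Tendsto f atTop (𝓝 0)) (x : ℝ) : f x = 0 := by
  rcases le_total 0 c with hc | hc
  · have hmono : Monotone f := monotone_of_hasDerivAt_nonneg hf fun y => mul_nonneg hc (hg y)
    exact le_antisymm (hmono.ge_of_tendsto htop x) (hmono.le_of_tendsto hbot x)
  · have hanti : Antitone f :=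
      antitone_of_hasDerivAt_nonpos hf fun y => mul_nonpos_of_nonpos_of_nonneg hc (hg y)
    exact le_antisymm (hanti.ge_of_tendsto hbot x) (hanti.le_of_tendsto htop x)

/-- Uniqueness for the linear system `(ψ, ψ')' = (ψ', q ψ)`, which is Lipschitz when `q` is
bounded. -/
theorem eq_zero_of_initial_zero {ψ ψ' q : ℝ → ℝ} {M : ℝ}
    (hψ : ∀ x, HasDerivAt ψ (ψ' x) x) (hψ' : ∀ x, HasDerivAt ψ' (q x * ψ x) x)
    (hq : ∀ x, |q x| ≤ M) {x₀ : ℝ} (h₀ : ψ x₀ = 0) (h₀' : ψ' x₀ = 0) : ψ = 0 := by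
  have hlip (t : ℝ) : LipschitzOnWith ⟨max 1 M, by positivity⟩
      (fun p : ℝ × ℝ => (p.2, q t * p.1)) univ := by
    refine (LipschitzWith.of_dist_le_mul fun p r => ?_).lipschitzOnWith
    change _ ≤ max 1 M * _
    simp only [Prod.dist_eq, Real.dist_eq, ← mul_sub, abs_mul]
    have h₁ := le_max_left |p.1 - r.1| |p.2 - r.2|
    have h₂ := le_max_right |p.1 - r.1| |p.2 - r.2|
    have h₃ := le_max_left 1 M
    have h₄ := le_max_right 1 M
    refine max_le ?_ ?_ <;> nlinarith [abs_nonneg (p.1 - r.1), abs_nonneg (q t), hq t]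
  have hsol := ODE_solution_unique_univ (f := fun x => (ψ x, ψ' x)) (g := fun _ => (0, 0))
    (t₀ := x₀) hlip (fun t => ⟨(hψ t).prodMk (hψ' t), trivial⟩)
    (fun t => ⟨(hasDerivAt_const t _).congr_deriv (by simp [Prod.zero_eq_mk]), trivial⟩)
    (by simp [h₀, h₀'])
  funext x
  exact congrArg Prod.fst (congrFun hsol x)

/-- Sturm comparison with `sin (ω (t - x₀))`, which has no zero on `(x₀, x₀ + π / ω)`. -/
theorem sturm_deriv_nonneg {ψ ψ' q : ℝ → ℝ} {ω x₀ a : ℝ}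
    (hψ : ∀ x, HasDerivAt ψ (ψ' x) x) (hψ' : ∀ x, HasDerivAt ψ' (q x * ψ x) x)
    (hω : 0 < ω) (hx₀a : x₀ < a) (hωa : ω * (a - x₀) ≤ π / 2)
    (hq : ∀ t ∈ Ioo x₀ a, -ω ^ 2 < q t) (h₀ : ψ x₀ = 0) (hpos : ∀ t ∈ Ioc x₀ a, 0 < ψ t) :
    0 ≤ ψ' a := by
  set s : ℝ → ℝ := fun t => sin (ω * (t - x₀))
  set c : ℝ → ℝ := fun t => cos (ω * (t - x₀))
  have hlin (t : ℝ) : HasDerivAt (fun t => ω * (t - x₀)) ω t := by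
    simpa using ((hasDerivAt_id t).sub_const x₀).const_mul ω
  have hZ (t : ℝ) : HasDerivAt (fun t => s t * ψ' t - ω * c t * ψ t)
      (s t * ((q t + ω ^ 2) * ψ t)) t := by
    have := (((hasDerivAt_sin _).comp t (hlin t)).mul (hψ' t)).sub
      ((((hasDerivAt_cos _).comp t (hlin t)).const_mul ω).mul (hψ t))
    exact this.congr_deriv (by simp only [s, Function.comp_apply]; ring)
  have hmono : StrictMonoOn (fun t => s t * ψ' t - ω * c t * ψ t) (Icc x₀ a) := by
    refine strictMonoOn_of_hasDerivWithinAt_pos (convex_Icc _ _)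
      (HasDerivAt.continuousOn fun t _ => hZ t) (fun t _ => (hZ t).hasDerivWithinAt) ?_
    rw [interior_Icc]
    intro t ht
    have hsin : 0 < s t := sin_pos_of_pos_of_lt_pi (by nlinarith [ht.1])
      (by nlinarith [ht.2, pi_pos])
    exact mul_pos hsin (mul_pos (by linarith [hq t ht]) (hpos t ⟨ht.1, ht.2.le⟩))
  have hZa := hmono (left_mem_Icc.2 hx₀a.le) (right_mem_Icc.2 hx₀a.le) hx₀a
  simp only [s, c, sub_self, mul_zero, sin_zero, cos_zero, h₀] at hZa
  have hsin : 0 < sin (ω * (a - x₀)) :=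
    sin_pos_of_pos_of_lt_pi (by nlinarith) (by linarith [pi_pos])
  have hcos : 0 ≤ cos (ω * (a - x₀)) :=
    cos_nonneg_of_neg_pi_div_two_le_of_le (by nlinarith [pi_pos]) hωa
  by_contra! hneg
  nlinarith [mul_pos hsin (neg_pos.2 hneg), mul_nonneg (mul_nonneg hω.le hcos)
    (hpos a ⟨hx₀a, le_rfl⟩).le]

noncomputable def wronskian (f g : ℝ → ℝ) (x : ℝ) : ℝ := f x * deriv g x - deriv f x * g x

theorem wronskian_comp_neg (f g : ℝ → ℝ) (x : ℝ) :
    wronskian (fun y => f (-y)) (fun y => g (-y)) x = -wronskian f g (-x) := by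
  simp only [wronskian, deriv_comp_neg]; ring

theorem exists_eq_const_mul_of_wronskian_eq_zero {f g : ℝ → ℝ} (hf : Differentiable ℝ f)
    (hg : Differentiable ℝ g) (hf₀ : ∀ x, f x ≠ 0) (hW : ∀ x, wronskian f g x = 0) :
    ∃ c, g = fun x => c * f x := by
  have hq (x : ℝ) : HasDerivAt (fun x => g x / f x) 0 x := by
    refine ((hg x).hasDerivAt.div (hf x).hasDerivAt (hf₀ x)).congr_deriv ?_
    have := hW x
    rw [wronskian] at this
    rw [div_eq_zero_iff]
    left; linarith
  refine ⟨g 0 / f 0, funext fun x => ?_⟩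
  rw [← is_const_of_deriv_eq_zero (fun x => (hq x).differentiableAt) (fun x => (hq x).deriv) x 0,
    div_mul_cancel₀ _ (hf₀ x)]

theorem Function.Even.deriv {f : ℝ → ℝ} (hf : f.Even) : (deriv f).Odd := fun x => by
  have := deriv_comp_neg f x
  rw [show (fun y => f (-y)) = f from funext hf] at this
  linarith

structure IsEigenfunction (V : ℝ → ℝ) (lam : ℝ) (ψ : ℝ → ℝ) : Prop where
  contDiff : ContDiff ℝ 2 ψ
  integrable_sq : Integrable (fun x => ψ x ^ 2)
  schrodinger : ∀ x, -deriv (deriv ψ) x + V x * ψ x = lam * ψ x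

namespace IsEigenfunction

variable {V : ℝ → ℝ} {a κ lam : ℝ} {φ ψ : ℝ → ℝ}

theorem deriv_deriv (h : IsEigenfunction V lam ψ) (x : ℝ) :
    deriv (deriv ψ) x = (V x - lam) * ψ x := by
  linear_combination -h.schrodinger x

theorem differentiable (h : IsEigenfunction V lam ψ) : Differentiable ℝ ψ :=
  h.contDiff.differentiable (by norm_num)

theorem hasDerivAt (h : IsEigenfunction V lam ψ) (x : ℝ) : HasDerivAt ψ (deriv ψ x) x :=
  (h.differentiable x).hasDerivAt

theorem hasDerivAt_deriv (h : IsEigenfunction V lam ψ) (x : ℝ) :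
    HasDerivAt (deriv ψ) ((V x - lam) * ψ x) x :=
  h.deriv_deriv x ▸ (h.contDiff.differentiable_deriv_two x).hasDerivAt

theorem continuous (h : IsEigenfunction V lam ψ) : Continuous ψ :=
  h.contDiff.continuous

theorem neg (h : IsEigenfunction V lam ψ) : IsEigenfunction V lam (fun x => -ψ x) := by
  refine ⟨h.contDiff.neg, by simpa using h.integrable_sq, fun x => ?_⟩
  simp only [deriv.fun_neg']
  linear_combination -h.schrodinger x

theorem comp_neg (hV : V.Even) (h : IsEigenfunction V lam ψ) :
    IsEigenfunction V lam (fun x => ψ (-x)) := by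
  refine ⟨h.contDiff.comp contDiff_neg, ?_, fun x => ?_⟩
  · exact (Measure.measurePreserving_neg volume).integrable_comp_of_integrable h.integrable_sq
  · have hd : deriv (fun x => ψ (-x)) = fun x => -deriv ψ (-x) :=
      funext fun y => deriv_comp_neg ψ y
    simp only [hd, deriv.fun_neg', deriv_comp_neg (deriv ψ), neg_neg, ← hV x]
    exact h.schrodinger (-x)

theorem eq_zero_of_eq_zero_of_deriv_eq_zero {M x₀ : ℝ} (hV : ∀ x, |V x| ≤ M)
    (h : IsEigenfunction V lam ψ) (h₀ : ψ x₀ = 0) (h₀' : deriv ψ x₀ = 0) : ψ = 0 :=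
  eq_zero_of_initial_zero (M := M + |lam|) h.hasDerivAt h.hasDerivAt_deriv
    (fun x => by linarith [abs_sub (V x) lam, hV x]) h₀ h₀'

/-- `(ψ ψ')' = ψ'^2 + (V - lam) ψ^2`. -/
theorem monotoneOn_mul_deriv (hV : ∀ x, a ≤ x → 0 ≤ V x) (hlam : lam < 0)
    (h : IsEigenfunction V lam ψ) : MonotoneOn (fun x => ψ x * deriv ψ x) (Ici a) := by
  have hE (x : ℝ) := (h.hasDerivAt x).mul (h.hasDerivAt_deriv x)
  refine monotoneOn_of_hasDerivWithinAt_nonneg (convex_Ici a)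
    (HasDerivAt.continuousOn fun x _ => hE x) (fun x _ => (hE x).hasDerivWithinAt) ?_
  rw [interior_Ici]
  intro x hx
  have := hV x (le_of_lt hx)
  nlinarith [sq_nonneg (deriv ψ x), mul_nonneg (sub_nonneg.2 (this.trans' hlam.le))
    (sq_nonneg (ψ x))]

theorem mul_deriv_neg (hV : ∀ x, a ≤ x → 0 ≤ V x) (hlam : lam < 0)
    (h : IsEigenfunction V lam ψ) {x : ℝ} (hx : a ≤ x) (hψx : ψ x ≠ 0) :
    ψ x * deriv ψ x < 0 := by
  by_contra! hE
  have hd (t : ℝ) : HasDerivAt (fun t => ψ t ^ 2) (2 * (ψ t * deriv ψ t)) t :=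
    ((h.hasDerivAt t).pow 2).congr_deriv (by ring)
  have hsq : MonotoneOn (fun t => ψ t ^ 2) (Ici x) := by
    refine monotoneOn_of_hasDerivWithinAt_nonneg (convex_Ici x)
      (HasDerivAt.continuousOn fun t _ => hd t) (fun t _ => (hd t).hasDerivWithinAt) ?_
    rw [interior_Ici]
    exact fun t ht => mul_nonneg zero_le_two
      (hE.trans (h.monotoneOn_mul_deriv hV hlam hx (hx.trans ht.le) ht.le))
  obtain ⟨t, hxt, ht⟩ := exists_le_lt_of_integrable h.integrable_sq x
    (pow_two_pos_of_ne_zero hψx)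
  exact absurd (hsq self_mem_Ici hxt hxt) (not_le.2 ht)

theorem deriv_neg_of_pos (hV : ∀ x, a ≤ x → 0 ≤ V x) (hlam : lam < 0)
    (h : IsEigenfunction V lam ψ) {x : ℝ} (hx : a ≤ x) (hψx : 0 < ψ x) : deriv ψ x < 0 :=
  neg_of_mul_neg_right (h.mul_deriv_neg hV hlam hx hψx.ne') hψx.le

theorem eq_zero_of_eq_zero_of_lt (hV : ∀ x, a ≤ x → 0 ≤ V x) (hlam : lam < 0)
    (h : IsEigenfunction V lam ψ) {x t : ℝ} (hx : a ≤ x) (h₀ : ψ x = 0) (ht : x < t) :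
    ψ t = 0 := by
  by_contra hψt
  have hmono := h.monotoneOn_mul_deriv hV hlam hx (hx.trans ht.le) ht.le
  simp only [h₀, zero_mul] at hmono
  exact (h.mul_deriv_neg hV hlam (hx.trans ht.le) hψt).not_ge hmono

theorem eq_zero_of_eq_zero_of_le {M : ℝ} (hV : ∀ x, a ≤ x → 0 ≤ V x)
    (hVM : ∀ x, |V x| ≤ M) (hlam : lam < 0) (h : IsEigenfunction V lam ψ) {x : ℝ}
    (hx : a ≤ x) (h₀ : ψ x = 0) : ψ = 0 := by
  have hzero : ψ =ᶠ[𝓝 (x + 1)] 0 :=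
    eventually_of_mem (Ioi_mem_nhds (by linarith)) fun t ht =>
      h.eq_zero_of_eq_zero_of_lt hV hlam hx h₀ ht
  refine h.eq_zero_of_eq_zero_of_deriv_eq_zero hVM hzero.eq_of_nhds ?_
  rw [hzero.deriv_eq]
  simp

theorem tendsto_atTop_zero (hV : ∀ x, a ≤ x → 0 ≤ V x) (hlam : lam < 0)
    (h : IsEigenfunction V lam ψ) (hpos : ∀ x, a ≤ x → 0 < ψ x) :
    Tendsto ψ atTop (𝓝 0) := by
  have hanti : AntitoneOn ψ (Ici a) := by
    refine antitoneOn_of_hasDerivWithinAt_nonpos (convex_Ici a) h.continuous.continuousOn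
      (fun t _ => (h.hasDerivAt t).hasDerivWithinAt) ?_
    rw [interior_Ici]
    exact fun t ht => (h.deriv_neg_of_pos hV hlam ht.le (hpos t ht.le)).le
  refine tendsto_order.2 ⟨fun ε hε => ?_, fun ε hε => ?_⟩
  · filter_upwards [eventually_ge_atTop a] with t ht
    exact hε.trans (hpos t ht)
  · obtain ⟨x, hax, hx⟩ := exists_le_lt_of_integrable h.integrable_sq a (pow_pos hε 2)
    have hxε : ψ x < ε := lt_of_pow_lt_pow_left₀ 2 hε.le hx
    filter_upwards [eventually_ge_atTop x] with t ht
    exact (hanti hax (hax.trans ht) ht).trans_lt hxε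

theorem abs_deriv_le (hV : ∀ x, a ≤ x → 0 ≤ V x) (hlam : lam < 0)
    (h : IsEigenfunction V lam ψ) (hpos : ∀ x, a ≤ x → 0 < ψ x) {t : ℝ} (ht : a ≤ t) :
    |deriv ψ t| ≤ |deriv ψ a| := by
  have hmono : MonotoneOn (deriv ψ) (Ici a) := by
    refine monotoneOn_of_hasDerivWithinAt_nonneg (convex_Ici a)
      (HasDerivAt.continuousOn fun t _ => h.hasDerivAt_deriv t)
      (fun t _ => (h.hasDerivAt_deriv t).hasDerivWithinAt) ?_
    rw [interior_Ici]
    exact fun t ht => mul_nonneg (by linarith [hV t ht.le]) (hpos t ht.le).le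
  rw [abs_of_neg (h.deriv_neg_of_pos hV hlam ht (hpos t ht)),
    abs_of_neg (h.deriv_neg_of_pos hV hlam le_rfl (hpos a le_rfl))]
  exact neg_le_neg (hmono self_mem_Ici ht ht)

theorem ne_zero_of_nonneg_of_pos {ω x₀ : ℝ} (hV : ∀ x, a ≤ x → 0 ≤ V x)
    (hVω : ∀ x, -ω ^ 2 ≤ V x) (hω : 0 < ω) (hωa : ω * a ≤ π / 2) (hlam : lam < 0)
    (h : IsEigenfunction V lam ψ) (hx₀ : 0 ≤ x₀) (hpos : ∀ t ∈ Ioi x₀, 0 < ψ t) :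
    ψ x₀ ≠ 0 := by
  intro h₀
  have hx₀a : x₀ < a := by
    by_contra! hax
    exact (hpos (x₀ + 1) (by simp)).ne'
      (h.eq_zero_of_eq_zero_of_lt hV hlam hax h₀ (by linarith))
  have hψ'a := sturm_deriv_nonneg h.hasDerivAt h.hasDerivAt_deriv hω hx₀a (by nlinarith)
    (fun t _ => by linarith [hVω t]) h₀ (fun t ht => hpos t ht.1)
  exact (h.deriv_neg_of_pos hV hlam le_rfl (hpos a hx₀a)).not_ge hψ'a

theorem ne_zero_of_nonneg {M ω x : ℝ} (hV : ∀ x, a ≤ x → 0 ≤ V x) (hVM : ∀ x, |V x| ≤ M)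
    (hVω : ∀ x, -ω ^ 2 ≤ V x) (hω : 0 < ω) (hωa : ω * a ≤ π / 2) (hlam : lam < 0)
    (h : IsEigenfunction V lam ψ) (hψ : ψ ≠ 0) (hx : 0 ≤ x) : ψ x ≠ 0 := by
  intro h₀
  set Z := {t | ψ t = 0}
  have hZa : ∀ t ∈ Z, t ≤ a := fun t ht => by
    by_contra! hat
    exact hψ (h.eq_zero_of_eq_zero_of_le hV hVM hlam hat.le ht)
  have hZ : sSup Z ∈ Z := (isClosed_eq h.continuous continuous_const).csSup_mem ⟨x, h₀⟩ ⟨a, hZa⟩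
  have hxZ : x ≤ sSup Z := le_csSup ⟨a, hZa⟩ h₀
  have hne : ∀ t ∈ Ioi (sSup Z), ψ t ≠ 0 := fun t ht h₀ => (le_csSup ⟨a, hZa⟩ h₀).not_gt ht
  rcases isPreconnected_Ioi.pos_or_neg_of_ne_zero h.continuous.continuousOn hne with hpos | hneg
  · exact h.ne_zero_of_nonneg_of_pos hV hVω hω hωa hlam (hx.trans hxZ) hpos hZ
  · exact h.neg.ne_zero_of_nonneg_of_pos hV hVω hω hωa hlam (hx.trans hxZ)
      (fun t ht => neg_pos.2 (hneg t ht)) (neg_eq_zero.2 hZ)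

theorem ne_zero {M ω : ℝ} (hVe : V.Even) (hV : ∀ x, a ≤ x → 0 ≤ V x)
    (hVM : ∀ x, |V x| ≤ M) (hVω : ∀ x, -ω ^ 2 ≤ V x) (hω : 0 < ω) (hωa : ω * a ≤ π / 2)
    (hlam : lam < 0) (h : IsEigenfunction V lam ψ) (hψ : ψ ≠ 0) (x : ℝ) : ψ x ≠ 0 := by
  rcases le_total 0 x with hx | hx
  · exact h.ne_zero_of_nonneg hV hVM hVω hω hωa hlam hψ hx
  · have hψ' : (fun y => ψ (-y)) ≠ 0 := fun h₀ =>
      hψ (funext fun y => by simpa using congrFun h₀ (-y))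
    simpa using (h.comp_neg hVe).ne_zero_of_nonneg hV hVM hVω hω hωa hlam hψ' (neg_nonneg.2 hx)

theorem hasDerivAt_wronskian (hφ : IsEigenfunction V κ φ) (hψ : IsEigenfunction V lam ψ)
    (x : ℝ) : HasDerivAt (wronskian φ ψ) ((κ - lam) * (φ x * ψ x)) x :=
  (((hφ.hasDerivAt x).mul (hψ.hasDerivAt_deriv x)).sub
    ((hφ.hasDerivAt_deriv x).mul (hψ.hasDerivAt x))).congr_deriv (by ring)

theorem tendsto_wronskian_atTop (hV : ∀ x, a ≤ x → 0 ≤ V x) (hκ : κ < 0) (hlam : lam < 0)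
    (hφ : IsEigenfunction V κ φ) (hψ : IsEigenfunction V lam ψ)
    (hφpos : ∀ x, a ≤ x → 0 < φ x) (hψpos : ∀ x, a ≤ x → 0 < ψ x) :
    Tendsto (wronskian φ ψ) atTop (𝓝 0) := by
  have hbound : Tendsto (fun t => φ t * |deriv ψ a| + |deriv φ a| * ψ t) atTop (𝓝 0) := by
    simpa using ((hφ.tendsto_atTop_zero hV hκ hφpos).mul_const _).add
      ((hψ.tendsto_atTop_zero hV hlam hψpos).const_mul _)
  refine squeeze_zero_norm' ?_ hbound
  filter_upwards [eventually_ge_atTop a] with t ht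
  calc ‖wronskian φ ψ t‖ ≤ |φ t * deriv ψ t| + |deriv φ t * ψ t| := abs_sub _ _
    _ = φ t * |deriv ψ t| + |deriv φ t| * ψ t := by
      rw [abs_mul, abs_mul, abs_of_pos (hφpos t ht), abs_of_pos (hψpos t ht)]
    _ ≤ φ t * |deriv ψ a| + |deriv φ a| * ψ t :=
      add_le_add (mul_le_mul_of_nonneg_left (hψ.abs_deriv_le hV hlam hψpos ht) (hφpos t ht).le)
        (mul_le_mul_of_nonneg_right (hφ.abs_deriv_le hV hκ hφpos ht) (hψpos t ht).le)

theorem eigenvalue_eq_and_exists_eq_const_mul_of_pos (hVe : V.Even)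
    (hV : ∀ x, a ≤ x → 0 ≤ V x) (hψ : IsEigenfunction V lam ψ) (hlam : lam < 0)
    (hψpos : ∀ x, 0 < ψ x) (hφ : IsEigenfunction V κ φ) (hκ : κ < 0) (hφpos : ∀ x, 0 < φ x) :
    lam = κ ∧ ∃ c, ψ = fun x => c * φ x := by
  have htop := hφ.tendsto_wronskian_atTop hV hκ hlam hψ (fun x _ => hφpos x) (fun x _ => hψpos x)
  have hbot : Tendsto (wronskian φ ψ) atBot (𝓝 0) := by
    have := ((hφ.comp_neg hVe).tendsto_wronskian_atTop hV hκ hlam (hψ.comp_neg hVe)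
      (fun x _ => hφpos _) (fun x _ => hψpos _)).comp tendsto_neg_atBot_atTop
    simpa [Function.comp_def, wronskian_comp_neg] using this.neg
  have hW := eq_zero_of_hasDerivAt_of_tendsto (hφ.hasDerivAt_wronskian hψ)
    (fun x => (mul_pos (hφpos x) (hψpos x)).le) hbot htop
  refine ⟨?_, exists_eq_const_mul_of_wronskian_eq_zero hφ.differentiable hψ.differentiable
    (fun x => (hφpos x).ne') hW⟩
  have hW' : HasDerivAt (wronskian φ ψ) 0 0 := by
    rw [show wronskian φ ψ = fun _ => 0 from funext hW]
    exact hasDerivAt_const _ _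
  rcases mul_eq_zero.1 ((hφ.hasDerivAt_wronskian hψ 0).unique hW') with h | h
  · linarith
  · exact absurd h (mul_pos (hφpos 0) (hψpos 0)).ne'

theorem eigenvalue_eq_and_exists_eq_const_mul {M ω : ℝ} (hVe : V.Even)
    (hV : ∀ x, a ≤ x → 0 ≤ V x) (hVM : ∀ x, |V x| ≤ M) (hVω : ∀ x, -ω ^ 2 ≤ V x)
    (hω : 0 < ω) (hωa : ω * a ≤ π / 2) (hψ : IsEigenfunction V lam ψ) (hlam : lam < 0)
    (hψ₀ : ψ ≠ 0) (hφ : IsEigenfunction V κ φ) (hκ : κ < 0) (hφpos : ∀ x, 0 < φ x) :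
    lam = κ ∧ ∃ c, ψ = fun x => c * φ x := by
  rcases isPreconnected_univ.pos_or_neg_of_ne_zero hψ.continuous.continuousOn
    (fun x _ => hψ.ne_zero hVe hV hVM hVω hω hωa hlam hψ₀ x) with hpos | hneg
  · exact hψ.eigenvalue_eq_and_exists_eq_const_mul_of_pos hVe hV hlam (fun x => hpos x trivial)
      hφ hκ hφpos
  · obtain ⟨hlamκ, c, hc⟩ := hψ.neg.eigenvalue_eq_and_exists_eq_const_mul_of_pos hVe hV hlam
      (fun x => neg_pos.2 (hneg x trivial)) hφ hκ hφpos
    refine ⟨hlamκ, -c, funext fun x => ?_⟩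
    linarith [congrFun hc x]

theorem even {M ω : ℝ} (hVe : V.Even) (hV : ∀ x, a ≤ x → 0 ≤ V x) (hVM : ∀ x, |V x| ≤ M)
    (hVω : ∀ x, -ω ^ 2 ≤ V x) (hω : 0 < ω) (hωa : ω * a ≤ π / 2) (hφ : IsEigenfunction V κ φ)
    (hκ : κ < 0) (hφpos : ∀ x, 0 < φ x) : φ.Even := by
  obtain ⟨-, c, hc⟩ := (hφ.comp_neg hVe).eigenvalue_eq_and_exists_eq_const_mul hVe hV hVM hVω
    hω hωa hκ (fun h₀ => (hφpos 0).ne' (by simpa using congrFun h₀ 0)) hφ hκ hφpos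
  have hc₁ : c = 1 := by
    have := congrFun hc 0
    simp only [neg_zero] at this
    nlinarith [hφpos 0]
  exact fun x => by simpa [hc₁] using congrFun hc x

end IsEigenfunction

theorem hasDerivAt_alphaFn (x : ℝ) : HasDerivAt alphaFn ((1/3) * (cosh x + 1)) x :=
  ((hasDerivAt_sinh x).add (hasDerivAt_id x)).const_mul (1/3)

theorem alphaFn_strictMono : StrictMono alphaFn :=
  strictMono_of_hasDerivAt_pos hasDerivAt_alphaFn fun x => by linarith [cosh_pos x]

theorem alphaFn_odd : alphaFn.Odd := fun x => by
  simp only [alphaFn, sinh_neg]; ring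

theorem alphaFn_surjective : Function.Surjective alphaFn := by
  intro y
  have hsinh : 0 ≤ sinh (3 * |y|) := sinh_nonneg_iff.2 (by positivity)
  have hcont : ContinuousOn alphaFn (Icc (-(3 * |y|)) (3 * |y|)) := by
    unfold alphaFn; fun_prop
  obtain ⟨x, -, hx⟩ := intermediate_value_Icc (by linarith [abs_nonneg y]) hcont
    (show y ∈ Icc _ _ by
      rw [alphaFn_odd]
      simp only [alphaFn, mem_Icc]
      constructor <;> linarith [le_abs_self y, neg_abs_le y])
  exact ⟨x, hx⟩

theorem alphaFn_alphaInv (x : ℝ) : alphaFn (alphaInv x) = x :=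
  Function.invFun_eq (alphaFn_surjective x)

theorem alphaInv_alphaFn (x : ℝ) : alphaInv (alphaFn x) = x :=
  Function.leftInverse_invFun alphaFn_strictMono.injective x

theorem le_alphaInv_iff {s x : ℝ} : s ≤ alphaInv x ↔ alphaFn s ≤ x := by
  conv_rhs => rw [← alphaFn_alphaInv x]
  exact alphaFn_strictMono.le_iff_le.symm

theorem alphaInv_odd : alphaInv.Odd := fun x => by
  conv_lhs => rw [← alphaFn_alphaInv x, ← alphaFn_odd, alphaInv_alphaFn]

/-- `Qs s ≤ 1` exactly when `cosh (s / 2) ^ 2 ≥ 3 / 2`, i.e. for `s ≥ 1.317…`; the threshold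
`s = 53/40` has `alphaFn s < 1.03`, so `Qt ≤ 1` on `[1.03, ∞)`. -/
theorem exp_53_div_80_bounds : 1.935 < exp (53/80) ∧ exp (53/80) < 1.94 := by
  have h := Real.exp_bound (x := 53/80) (by rw [abs_of_nonneg] <;> norm_num) (n := 6)
    (by norm_num)
  rw [abs_le, abs_of_nonneg (by norm_num : (0:ℝ) ≤ 53/80)] at h
  simp only [Finset.sum_range_succ] at h
  norm_num [Nat.factorial] at h ⊢
  constructor <;> linarith

theorem alphaFn_53_div_40_le : alphaFn (53/40) ≤ 103/100 := by
  obtain ⟨h₁, h₂⟩ := exp_53_div_80_bounds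
  have hexp : exp (53/40) = exp (53/80) ^ 2 := by rw [← exp_nat_mul]; norm_num
  have hinv : 1 / 1.94 ^ 2 < exp (-(53/40)) := by
    rw [exp_neg, hexp, one_div]
    exact inv_strictAnti₀ (by positivity) (by gcongr)
  simp only [alphaFn, sinh_eq, hexp]
  nlinarith

theorem three_halves_le_cosh_53_div_80_sq : 3/2 ≤ cosh (53/80) ^ 2 := by
  obtain ⟨h₁, h₂⟩ := exp_53_div_80_bounds
  have hinv : 1 / 1.94 < exp (-(53/80)) := by
    rw [exp_neg, one_div]
    exact inv_strictAnti₀ (by positivity) h₂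
  rw [cosh_eq]
  nlinarith

theorem Qs_pos (s : ℝ) : 0 < Qs s := by
  have := cosh_pos (s/2); unfold Qs; positivity

theorem Qs_le (s : ℝ) : Qs s ≤ 3/2 := by
  have h : 1 / cosh (s/2) ≤ 1 := div_le_one_of_le₀ (one_le_cosh _) (cosh_pos _).le
  have : 0 ≤ 1 / cosh (s/2) := by have := cosh_pos (s/2); positivity
  unfold Qs; nlinarith

theorem Qs_even : Qs.Even := fun s => by
  simp only [Qs, neg_div, cosh_neg]

theorem Qs_le_one {s : ℝ} (hs : 53/40 ≤ s) : Qs s ≤ 1 := by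
  have hcosh : cosh (53/80) ≤ cosh (s/2) := by
    rw [cosh_le_cosh, abs_of_nonneg (by norm_num), abs_of_nonneg (by linarith)]
    linarith
  have hsq : 3/2 ≤ cosh (s/2) ^ 2 :=
    three_halves_le_cosh_53_div_80_sq.trans (by gcongr)
  have := cosh_pos (s/2)
  rwa [Qs, div_pow, one_pow, mul_one_div, div_le_one (by positivity)]

theorem Vpot_even : Vpot.Even := fun x => by
  simp only [Vpot, Qt, alphaInv_odd.eq, Qs_even.eq]

theorem neg_le_Vpot (x : ℝ) : -(3/2) ^ 2 ≤ Vpot x := by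
  have h₁ := Qs_pos (alphaInv x); have h₂ := Qs_le (alphaInv x)
  simp only [Vpot, Qt]; nlinarith

theorem abs_Vpot_le (x : ℝ) : |Vpot x| ≤ 9/4 := by
  have h₁ := Qs_pos (alphaInv x); have h₂ := Qs_le (alphaInv x)
  rw [abs_le]
  constructor <;> simp only [Vpot, Qt] <;> nlinarith [sq_nonneg (Qs (alphaInv x) - 2/3)]

theorem Vpot_nonneg {x : ℝ} (hx : 103/100 ≤ x) : 0 ≤ Vpot x := by
  have h₁ := Qs_pos (alphaInv x)
  have h₂ := Qs_le_one (le_alphaInv_iff.2 (alphaFn_53_div_40_le.trans hx))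
  simp only [Vpot, Qt]; nlinarith

theorem unique_negative_eigenvalue_general (φ₀ : ℝ → ℝ) (μ₀ : ℝ)
    (hC2 : ContDiff ℝ 2 φ₀) (hpos : ∀ x : ℝ, 0 < φ₀ x)
    (hL2 : Integrable (fun x => (φ₀ x)^2))
    (hμ1 : (0.808:ℝ) ≤ μ₀)
    (heq : ∀ x : ℝ, -(deriv (deriv φ₀) x) + Vpot x * φ₀ x = -μ₀^2 * φ₀ x) :
    (∀ lam : ℝ, lam < 0 → lam ≠ -μ₀^2 →
      ∀ ψ : ℝ → ℝ, ContDiff ℝ 2 ψ → Integrable (fun x => (ψ x)^2) →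
        (∀ x : ℝ, -(deriv (deriv ψ) x) + Vpot x * ψ x = lam * ψ x) →
        ∀ x : ℝ, ψ x = 0) ∧
    (∀ ψ : ℝ → ℝ, ContDiff ℝ 2 ψ → Integrable (fun x => (ψ x)^2) →
      (∀ x : ℝ, -(deriv (deriv ψ) x) + Vpot x * ψ x = -μ₀^2 * ψ x) →
      ∃ c : ℝ, ψ = fun x => c * φ₀ x) ∧
    (∀ x : ℝ, φ₀ (-x) = φ₀ x) ∧
    (∀ x : ℝ, deriv φ₀ (-x) = -deriv φ₀ x) := by
  have hκ : -μ₀ ^ 2 < 0 := by nlinarith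
  have hφ : IsEigenfunction Vpot (-μ₀ ^ 2) φ₀ := ⟨hC2, hL2, heq⟩
  have hωa : 3 / 2 * (103 / 100) ≤ π / 2 := by linarith [pi_gt_d2]
  have key : ∀ lam < 0, ∀ ψ, IsEigenfunction Vpot lam ψ → ψ ≠ 0 →
      lam = -μ₀ ^ 2 ∧ ∃ c, ψ = fun x => c * φ₀ x := fun lam hlam ψ hψ hψ₀ =>
    hψ.eigenvalue_eq_and_exists_eq_const_mul Vpot_even (fun _ => Vpot_nonneg) abs_Vpot_le
      neg_le_Vpot (by norm_num) hωa hlam hψ₀ hφ hκ hpos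
  have heven : φ₀.Even := hφ.even Vpot_even (fun _ => Vpot_nonneg) abs_Vpot_le neg_le_Vpot
    (by norm_num) hωa hκ hpos
  refine ⟨fun lam hlam hne ψ hC2ψ hL2ψ heqψ x => ?_, fun ψ hC2ψ hL2ψ heqψ => ?_, heven,
    heven.deriv⟩
  · by_contra hx
    exact hne (key lam hlam ψ ⟨hC2ψ, hL2ψ, heqψ⟩ fun h₀ => hx (congrFun h₀ x)).1
  · by_cases hψ₀ : ψ = 0
    · exact ⟨0, funext fun x => by simp [hψ₀]⟩
    · exact (key _ hκ ψ ⟨hC2ψ, hL2ψ, heqψ⟩ hψ₀).2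

/-- `−μ₀²` is the unique negative eigenvalue of `L`, it is
simple, and the ground state is even with odd derivative. -/
theorem unique_negative_eigenvalue (φ₀ : ℝ → ℝ) (μ₀ : ℝ)
    (hC2 : ContDiff ℝ 2 φ₀) (hpos : ∀ x : ℝ, 0 < φ₀ x)
    (hL2 : Integrable (fun x => (φ₀ x)^2))
    (hμ1 : (0.808:ℝ) ≤ μ₀) (hμ2 : μ₀ ≤ (0.883:ℝ))
    (heq : ∀ x : ℝ, -(deriv (deriv φ₀) x) + Vpot x * φ₀ x = -μ₀^2 * φ₀ x) :
    (∀ lam : ℝ, lam < 0 → lam ≠ -μ₀^2 →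
      ∀ ψ : ℝ → ℝ, ContDiff ℝ 2 ψ → Integrable (fun x => (ψ x)^2) →
        (∀ x : ℝ, -(deriv (deriv ψ) x) + Vpot x * ψ x = lam * ψ x) →
        ∀ x : ℝ, ψ x = 0) ∧
    (∀ ψ : ℝ → ℝ, ContDiff ℝ 2 ψ → Integrable (fun x => (ψ x)^2) →
      (∀ x : ℝ, -(deriv (deriv ψ) x) + Vpot x * ψ x = -μ₀^2 * ψ x) →
      ∃ c : ℝ, ψ = fun x => c * φ₀ x) ∧
    (∀ x : ℝ, φ₀ (-x) = φ₀ x) ∧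
    (∀ x : ℝ, deriv φ₀ (-x) = -deriv φ₀ x) :=
  unique_negative_eigenvalue_general φ₀ μ₀ hC2 hpos hL2 hμ1 heq
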